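/- arXiv:0901.3897 — 10 statements merged into one kernel-verified Lean document; each statement's English description precedes it below -/
import Mathlib

section
/- A finite simple graph G satisfies WSC if and only if G is a domain. -/
variable {V : Type*} [Fintype V] [DecidableEq V]

/-- For `k ∈ ℕ`, a `k`-cover of `G` is a function from the vertices of `G` to `ℕ` that is
not identically zero and whose values at the two endpoints of any edge sum to at least `k`. -/
def IsCover (G : SimpleGraph V) (k : ℕ) (a : V → ℕ) : Prop :=
  a ≠ 0 ∧ ∀ i j : V, G.Adj i j → k ≤ a i + a j

/-- A `k`-cover is basic if it is not the pointwise sum of a `k`-cover and a `0`-cover. -/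
def IsBasicCover (G : SimpleGraph V) (k : ℕ) (a : V → ℕ) : Prop :=
  IsCover G k a ∧ ¬ ∃ b c : V → ℕ, IsCover G k b ∧ IsCover G 0 c ∧ a = b + c

/-- `G` is a domain if for all `s, t` with `s + t ≥ 1`, the pointwise sum of any `s` basic
`1`-covers and any `t` basic `2`-covers of `G` is a basic `(s + 2t)`-cover. -/
def IsGraphDomain (G : SimpleGraph V) : Prop :=
  ∀ s t : ℕ, 1 ≤ s + t → ∀ f : Fin s → V → ℕ, ∀ g : Fin t → V → ℕ,
    (∀ p, IsBasicCover G 1 (f p)) → (∀ q, IsBasicCover G 2 (g q)) →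
    IsBasicCover G (s + 2 * t) ((∑ p, f p) + (∑ q, g q))

/-- `G` is unmixed if all basic `1`-covers of `G` have the same norm. -/
def IsUnmixed (G : SimpleGraph V) : Prop :=
  ∀ a b : V → ℕ, IsBasicCover G 1 a → IsBasicCover G 1 b → ∑ v, a v = ∑ v, b v

/-- `G` satisfies WSC if it has at least one edge and every non-isolated vertex `i` has a
neighbour `j` such that any neighbour of `i` is adjacent to any neighbour of `j`. -/
def SatisfiesWSC (G : SimpleGraph V) : Prop :=
  (∃ i j : V, G.Adj i j) ∧
    ∀ i : V, (∃ x, G.Adj i x) →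
      ∃ j : V, G.Adj i j ∧ ∀ i' j' : V, G.Adj i i' → G.Adj j j' → G.Adj i' j'

/-- `G` satisfies SC if for every edge `{i, j}`, every neighbour `i'` of `i` and every
neighbour `j'` of `j`, one has `i' ≠ j'` and `{i', j'}` is an edge. -/
def SatisfiesSC (G : SimpleGraph V) : Prop :=
  ∀ i j i' j' : V, G.Adj i j → G.Adj i i' → G.Adj j j' → i' ≠ j' ∧ G.Adj i' j'

/-- `G` satisfies MSC if the set of non-isolated vertices of `G` is nonempty and carries a
perfect matching `M` (a matching of `G` whose vertex set is exactly the set of non-isolated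
vertices) such that for every edge `{i, j}` of `M`, every neighbour `i'` of `i` in `G` and
every neighbour `j'` of `j` in `G`, `{i', j'}` is an edge of `G`. -/
def SatisfiesMSC (G : SimpleGraph V) : Prop :=
  ∃ M : G.Subgraph, M.verts = {v : V | ∃ w, G.Adj v w} ∧ M.verts.Nonempty ∧
    M.IsMatching ∧
    ∀ i j : V, M.Adj i j → ∀ i' j' : V, G.Adj i i' → G.Adj j j' → G.Adj i' j'

/-- The graph `G^{0-1}`: its edges are the edges `{i, j}` of `G` such that `a i + a j = 1`
for every basic `1`-cover `a` of `G`.  (Its vertex set is interpreted as the set of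
non-isolated vertices of `G`; here it is defined on all of `V`, and the vertices of `G`
that are isolated stay isolated, so they can be excluded explicitly when needed.) -/
def ZeroOne (G : SimpleGraph V) : SimpleGraph V where
  Adj i j := G.Adj i j ∧ ∀ a : V → ℕ, IsBasicCover G 1 a → a i + a j = 1
  symm := by
    constructor
    intro i j h
    exact ⟨h.1.symm, fun a ha => by rw [add_comm]; exact h.2 a ha⟩
  loopless := by
    constructor
    intro i h
    exact G.irrefl h.1

/-- `A ∪ B` is a vertex bipartition of the connected component `C` of `H`, and the edges of
`H` inside `C` are exactly the pairs `{x, y}` with `x ∈ A` and `y ∈ B` (so the component is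
a complete bipartite graph on `A ∪ B`). -/
def IsCompBipartition (H : SimpleGraph V) (C : H.ConnectedComponent) (A B : Set V) : Prop :=
  A ∪ B = C.supp ∧ Disjoint A B ∧
    ∀ x ∈ C.supp, ∀ y ∈ C.supp,
      (H.Adj x y ↔ (x ∈ A ∧ y ∈ B) ∨ (x ∈ B ∧ y ∈ A))

/-- The graph `G⁺` obtained from `G` by attaching a pendant vertex to each vertex of `G`:
`Sum.inl v` is the original vertex `v`, and `Sum.inr v` is the pendant attached to `v`. -/
def GPlus (G : SimpleGraph V) : SimpleGraph (V ⊕ V) where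
  Adj x y :=
    match x, y with
    | Sum.inl u, Sum.inl v => G.Adj u v
    | Sum.inl u, Sum.inr v => u = v
    | Sum.inr u, Sum.inl v => u = v
    | Sum.inr _, Sum.inr _ => False
  symm := by
    constructor
    rintro (u | u) (v | v) h
    · exact h.symm
    · exact h.symm
    · exact h.symm
    · exact h.elim
  loopless := by
    constructor
    rintro (u | u) h
    · exact G.irrefl h
    · exact h

/-!
A basic `k`-cover `a` (for `k ≥ 1`, in a graph with an edge) is exactly a `k`-cover that is
tight around its support: every vertex `v` with `a v ≠ 0` lies on an edge `{v, u}` with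
`a v + a u ≤ k`, for otherwise lowering `a` by one at `v` leaves a `k`-cover.

If `{i, j}` is an edge such that every neighbour of `i` is adjacent to every neighbour of `j`,
tightness at `i` and at `j` through edges `{i, u}`, `{j, u'}` and the cover condition on
`{u, u'}` force `a i + a j = k`. Under WSC every non-isolated vertex lies on such an edge, so a
sum of basic covers is again tight around its support, hence basic.

Conversely, the basic `1`-covers are the indicators of the minimal vertex covers. If their sum
`a` (over all minimal vertex covers `C`) is basic, a non-isolated vertex `i` has a neighbour `j`
with `a i + a j ≤ #{C}`; as every `C` contains `i` or `j`, no `C` contains both. Yet if a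
neighbour `i'` of `i` and a neighbour `j'` of `j` were not adjacent, a minimal vertex cover
avoiding `i'` and `j'` would contain both `i` and `j`.
-/

section

-- Shadows the ambient `V`, so that each lemma takes only the instances it uses.
variable {V : Type*} {G : SimpleGraph V} {k : ℕ} {a : V → ℕ}

lemma IsBasicCover.exists_adj_add_le [DecidableEq V] (hk : 1 ≤ k) (hG : ∃ x y, G.Adj x y)
    (ha : IsBasicCover G k a) {v : V} (hv : a v ≠ 0) :
    ∃ u, G.Adj v u ∧ a v + a u ≤ k := by
  by_contra! hloose
  have hle : Pi.single v 1 ≤ a := fun w => by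
    rcases eq_or_ne w v with rfl | hw
    · simpa using Nat.one_le_iff_ne_zero.mpr hv
    · simp [hw]
  refine ha.2 ⟨a - Pi.single v 1, Pi.single v 1, ⟨?_, fun i j hij => ?_⟩,
    ⟨by simp, fun _ _ _ => Nat.zero_le _⟩, (tsub_add_cancel_of_le hle).symm⟩
  · obtain ⟨x, y, hxy⟩ := hG
    intro h0
    have hx := congrFun h0 x
    have hy := congrFun h0 y
    have := ha.1.2 x y hxy
    rcases eq_or_ne x v with rfl | hxv
    · have := hloose y hxy
      simp [hxy.ne'] at hx hy
      omega
    rcases eq_or_ne y v with rfl | hyv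
    · have := hloose x hxy.symm
      simp [hxv] at hx hy
      omega
    simp [hxv, hyv] at hx hy
    omega
  · have := ha.1.2 i j hij
    rcases eq_or_ne i v with rfl | hiv
    · have := hloose j hij
      simp [hij.ne']
      omega
    rcases eq_or_ne j v with rfl | hjv
    · have := hloose i hij.symm
      simp [hiv]
      omega
    simpa [hiv, hjv] using this

lemma isBasicCover_of_forall_exists_adj_add_le (ha : IsCover G k a)
    (htight : ∀ v, a v ≠ 0 → ∃ u, G.Adj v u ∧ a v + a u ≤ k) : IsBasicCover G k a := by
  refine ⟨ha, ?_⟩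
  rintro ⟨b, c, hb, hc, rfl⟩
  obtain ⟨v, hv⟩ := Function.ne_iff.mp hc.1
  obtain ⟨u, hvu, hle⟩ := htight v (by simp_all)
  have := hb.2 v u hvu
  simp only [Pi.add_apply, Pi.zero_apply] at hv hle
  omega

lemma IsBasicCover.add_eq_of_adj [DecidableEq V] (hk : 1 ≤ k) (ha : IsBasicCover G k a)
    {i j : V} (hij : G.Adj i j) (hsq : ∀ i' j', G.Adj i i' → G.Adj j j' → G.Adj i' j') :
    a i + a j = k := by
  have hG : ∃ x y, G.Adj x y := ⟨i, j, hij⟩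
  refine le_antisymm ?_ (ha.1.2 i j hij)
  rcases eq_or_ne (a i) 0 with hi | hi <;> rcases eq_or_ne (a j) 0 with hj | hj
  · omega
  · obtain ⟨u', -, hu'⟩ := ha.exists_adj_add_le hk hG hj
    omega
  · obtain ⟨u, -, hu⟩ := ha.exists_adj_add_le hk hG hi
    omega
  · obtain ⟨u, hiu, hu⟩ := ha.exists_adj_add_le hk hG hi
    obtain ⟨u', hju', hu'⟩ := ha.exists_adj_add_le hk hG hj
    have := ha.1.2 u u' (hsq u u' hiu hju')
    omega

theorem SatisfiesWSC.isBasicCover_sum [DecidableEq V] (hG : SatisfiesWSC G)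
    {ι : Type*} [Fintype ι] [Nonempty ι] {k : ι → ℕ} {a : ι → V → ℕ} (hk : ∀ p, 1 ≤ k p)
    (ha : ∀ p, IsBasicCover G (k p) (a p)) : IsBasicCover G (∑ p, k p) (∑ p, a p) := by
  have hsum_adj : ∀ i j, (∑ p, a p) i + (∑ p, a p) j = ∑ p, (a p i + a p j) := by
    simp [Finset.sum_apply, Finset.sum_add_distrib]
  have htight : ∀ i j, G.Adj i j → (∀ i' j', G.Adj i i' → G.Adj j j' → G.Adj i' j') →
      (∑ p, a p) i + (∑ p, a p) j = ∑ p, k p := fun i j hij hsq => by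
    rw [hsum_adj]
    exact Finset.sum_congr rfl fun p _ => (ha p).add_eq_of_adj (hk p) hij hsq
  have hcover : IsCover G (∑ p, k p) (∑ p, a p) := by
    refine ⟨fun h0 => ?_, fun i j hij => ?_⟩
    · obtain ⟨i, i₀, hii₀⟩ := hG.1
      obtain ⟨j, hij, hsq⟩ := hG.2 i ⟨i₀, hii₀⟩
      have hpos : 0 < ∑ p, k p := Finset.sum_pos (fun p _ => hk p) Finset.univ_nonempty
      have := htight i j hij hsq
      simp only [h0, Pi.zero_apply] at this
      omega
    · rw [hsum_adj]
      exact Finset.sum_le_sum fun p _ => (ha p).1.2 i j hij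
  refine isBasicCover_of_forall_exists_adj_add_le hcover fun v hv => ?_
  rw [Finset.sum_apply] at hv
  obtain ⟨p, -, hp⟩ := Finset.exists_ne_zero_of_sum_ne_zero hv
  obtain ⟨u, hvu, -⟩ := (ha p).exists_adj_add_le (hk p) hG.1 hp
  obtain ⟨j, hvj, hsq⟩ := hG.2 v ⟨u, hvu⟩
  exact ⟨j, hvj, (htight v j hvj hsq).le⟩

lemma exists_adj_notMem_of_minimal_isVertexCover [DecidableEq V] {C : Finset V}
    (hC : Minimal (fun C : Finset V => G.IsVertexCover C) C) {v : V} (hv : v ∈ C) :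
    ∃ u, G.Adj v u ∧ u ∉ C := by
  by_contra! hnbrs
  have hcover : G.IsVertexCover (C.erase v : Set V) := fun x y hxy => by
    rcases eq_or_ne x v with rfl | hxv
    · exact Or.inr (Finset.mem_erase.mpr ⟨hxy.ne', hnbrs y hxy⟩)
    rcases eq_or_ne y v with rfl | hyv
    · exact Or.inl (Finset.mem_erase.mpr ⟨hxv, hnbrs x hxy.symm⟩)
    simpa [hxv, hyv] using hC.1 hxy
  simpa using hC.2 hcover (Finset.erase_subset v C) hv

lemma isBasicCover_indicator_of_minimal_isVertexCover (hG : ∃ x y, G.Adj x y)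
    {C : Finset V} (hC : Minimal (fun C : Finset V => G.IsVertexCover C) C) :
    IsBasicCover G 1 ((C : Set V).indicator 1) := by
  classical
  have hcover : ∀ x y, G.Adj x y → 1 ≤ (C : Set V).indicator 1 x + (C : Set V).indicator 1 y :=
    fun x y hxy => by rcases hC.1 hxy with hx | hy <;> simp_all [Set.indicator_apply]
  refine isBasicCover_of_forall_exists_adj_add_le ⟨fun h0 => ?_, hcover⟩ fun v hv => ?_
  · obtain ⟨x, y, hxy⟩ := hG
    simpa [h0] using hcover x y hxy
  · have hvC : v ∈ C := by simpa [Set.indicator_apply] using hv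
    obtain ⟨u, hvu, hu⟩ := exists_adj_notMem_of_minimal_isVertexCover hC hvC
    exact ⟨u, hvu, by simp [hu, hvC]⟩

lemma exists_minimal_isVertexCover_disjoint [Fintype V] [DecidableEq V] {A : Finset V}
    (hA : G.IsIndepSet A) :
    ∃ C : Finset V, Minimal (fun C : Finset V => G.IsVertexCover C) C ∧ Disjoint C A := by
  obtain ⟨C, hCA, hC⟩ := Finite.exists_le_minimal (p := fun C : Finset V => G.IsVertexCover C)
    (a := Aᶜ) (by rwa [Finset.coe_compl, SimpleGraph.isVertexCover_compl])
  exact ⟨C, hC, Finset.disjoint_of_subset_left hCA disjoint_compl_left⟩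

lemma IsGraphDomain.exists_adj [DecidableEq V] [Nonempty V] (hG : IsGraphDomain G) :
    ∃ x y, G.Adj x y := by
  by_contra! hno
  obtain ⟨v⟩ := ‹Nonempty V›
  have hcover : ∀ k, IsCover G k (Pi.single v 1) :=
    fun k => ⟨by simp, fun x y hxy => (hno x y hxy).elim⟩
  have hbasic : IsBasicCover G 1 (Pi.single v 1) := by
    refine ⟨hcover 1, ?_⟩
    rintro ⟨b, c, hb, hc, hbc⟩
    have hsupp : ∀ w, w ≠ v → b w = 0 ∧ c w = 0 := fun w hw => by
      simpa [hw] using (congrFun hbc w).symm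
    obtain ⟨x, hx⟩ := Function.ne_iff.mp hb.1
    obtain ⟨y, hy⟩ := Function.ne_iff.mp hc.1
    have hxv : x = v := by_contra fun h => hx (hsupp x h).1
    have hyv : y = v := by_contra fun h => hy (hsupp y h).2
    rw [hxv] at hx
    rw [hyv] at hy
    have := congrFun hbc v
    simp only [Pi.single_eq_same, Pi.add_apply, Pi.zero_apply] at this hx hy
    omega
  -- `e + e` must be a basic `2`-cover, but `e` is both a `2`-cover and a `0`-cover.
  refine (hG 2 0 (by norm_num) (fun _ => Pi.single v 1) Fin.elim0 (fun _ => hbasic)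
    (fun q => q.elim0)).2 ⟨Pi.single v 1, Pi.single v 1, hcover 2, hcover 0, ?_⟩
  simp [two_mul]

lemma IsGraphDomain.isBasicCover_sum (hG : IsGraphDomain G) {ι : Type*} [Fintype ι]
    [Nonempty ι] {a : ι → V → ℕ} (ha : ∀ p, IsBasicCover G 1 (a p)) :
    IsBasicCover G (Fintype.card ι) (∑ p, a p) := by
  have := hG (Fintype.card ι) 0 Fintype.card_pos (a ∘ (Fintype.equivFin ι).symm) Fin.elim0
    (fun p => ha _) (fun q => q.elim0)
  simpa [Function.comp_def, Equiv.sum_comp] using this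

lemma IsGraphDomain.exists_adj_not_both_mem_minimal_isVertexCover [Fintype V]
    [DecidableEq V] [Nonempty V] (hG : IsGraphDomain G) {i i₀ : V} (hii₀ : G.Adj i i₀) :
    ∃ j, G.Adj i j ∧ ∀ C : Finset V, Minimal (fun C : Finset V => G.IsVertexCover C) C →
      ¬ (i ∈ C ∧ j ∈ C) := by
  classical
  have hedge := hG.exists_adj
  let ι := {C : Finset V // Minimal (fun C : Finset V => G.IsVertexCover C) C}
  let χ : ι → V → ℕ := fun C => (C.1 : Set V).indicator 1
  obtain ⟨C₀, hC₀, hC₀i₀⟩ := exists_minimal_isVertexCover_disjoint (G := G) (A := {i₀}) (by simp)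
  have hi₀ : i₀ ∉ C₀ := Finset.disjoint_singleton_right.mp hC₀i₀
  have hiC₀ : i ∈ C₀ := (hC₀.1 hii₀).resolve_right hi₀
  have : Nonempty ι := ⟨⟨C₀, hC₀⟩⟩
  have hbasic := hG.isBasicCover_sum (a := χ) fun C =>
    isBasicCover_indicator_of_minimal_isVertexCover hedge C.2
  have hi : (∑ C, χ C) i ≠ 0 := by
    rw [Finset.sum_apply, Ne, Finset.sum_eq_zero_iff]
    exact fun h => by simpa [χ, hiC₀] using h ⟨C₀, hC₀⟩ (Finset.mem_univ _)
  obtain ⟨j, hij, hle⟩ := hbasic.exists_adj_add_le Fintype.card_pos hedge hi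
  refine ⟨j, hij, fun C hC hboth => ?_⟩
  have hcovered : ∀ C ∈ Finset.univ, 1 ≤ χ C i + χ C j :=
    fun C _ => (isBasicCover_indicator_of_minimal_isVertexCover hedge C.2).1.2 i j hij
  -- Each of the `#ι` terms is at least `1`, and by `hle` they sum to at most `#ι`.
  have htight := (Finset.sum_eq_sum_iff_of_le hcovered).mp <| le_antisymm
    (Finset.sum_le_sum hcovered)
    (by simpa [Finset.sum_apply, Finset.sum_add_distrib] using hle)
  simpa [χ, hboth] using htight ⟨C, hC⟩ (Finset.mem_univ _)

theorem IsGraphDomain.satisfiesWSC [Fintype V] [DecidableEq V] [Nonempty V]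
    (hG : IsGraphDomain G) : SatisfiesWSC G := by
  refine ⟨hG.exists_adj, fun i ⟨i₀, hii₀⟩ => ?_⟩
  obtain ⟨j, hij, hsep⟩ := hG.exists_adj_not_both_mem_minimal_isVertexCover hii₀
  refine ⟨j, hij, fun i' j' hii' hjj' => by_contra fun hnadj => ?_⟩
  have hindep : G.IsIndepSet ({i', j'} : Finset V) := by
    rw [Finset.coe_pair, ← SimpleGraph.isClique_compl, SimpleGraph.isClique_pair]
    exact fun hne => ⟨hne, hnadj⟩
  obtain ⟨C, hC, hdisj⟩ := exists_minimal_isVertexCover_disjoint hindep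
  have hi' : i' ∉ C := Finset.disjoint_right.mp hdisj (by simp)
  have hj' : j' ∉ C := Finset.disjoint_right.mp hdisj (by simp)
  exact hsep C hC ⟨(hC.1 hii').resolve_right hi', (hC.1 hjj').resolve_right hj'⟩

end

/-- A finite simple graph `G` satisfies WSC if and only if `G` is a domain. -/
theorem wsc_iff_domain [Nonempty V] (G : SimpleGraph V) :
    SatisfiesWSC G ↔ IsGraphDomain G := by
  refine ⟨fun hW s t hst f g hf hg => ?_, IsGraphDomain.satisfiesWSC⟩
  have : Nonempty (Fin s ⊕ Fin t) := Fintype.card_pos_iff.mp <| by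
    rw [Fintype.card_sum, Fintype.card_fin, Fintype.card_fin]
    omega
  have hsum := hW.isBasicCover_sum (k := Sum.elim 1 2) (a := Sum.elim f g)
    (by rintro (p | q) <;> simp) (by rintro (p | q); exacts [hf p, hg q])
  simpa [Fintype.sum_sum_type, mul_comm] using hsum
end

section
/- Let {i,j} be an edge of a finite simple graph G. If a(i)+a(j)=1 for every basic 1-cover a of G, then for every neighbor i' of i in G and every neighbor j' of j in G, one has i' ≠ j' and {i',j'} is an edge of G. -/
variable {V : Type*} [Fintype V] [DecidableEq V]

/-!
If some neighbour `i'` of `i` and some neighbour `j'` of `j` were equal or non-adjacent, then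
`{i', j'}` would be independent and would extend to a maximal independent set `I`. The indicator
of the complement of `I` is a basic `1`-cover: every vertex outside `I` has a neighbour in `I`,
so every vertex of positive weight lies on an edge of weight exactly `1`. Since `i` and `j` are
adjacent to `i'` and `j'`, neither lies in `I`, so this cover has weight `2` on `{i, j}`.
-/

section

variable {α : Type*} {G : SimpleGraph α}

/-- In a decomposition `a = b + c` with `b` a `k`-cover, `c` vanishes at both ends of every
tight edge of `a`. -/
theorem isBasicCover_of_forall_exists_tight {k : ℕ} {a : α → ℕ} (ha : IsCover G k a)
    (htight : ∀ v, a v ≠ 0 → ∃ w, G.Adj v w ∧ a v + a w = k) : IsBasicCover G k a := by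
  refine ⟨ha, ?_⟩
  rintro ⟨b, c, hb, hc, rfl⟩
  obtain ⟨v, hv⟩ : ∃ v, c v ≠ 0 := Function.ne_iff.mp hc.1
  obtain ⟨w, hvw, hsum⟩ := htight v (by simp only [Pi.add_apply]; omega)
  have := hb.2 v w hvw
  simp only [Pi.add_apply] at hsum
  omega

theorem Maximal.exists_adj_of_notMem {I : Set α} (hI : Maximal G.IsIndepSet I) {v : α}
    (hv : v ∉ I) : ∃ w ∈ I, G.Adj v w := by
  by_contra! hno
  refine hv (hI.mem_of_prop_insert ?_)
  exact Set.pairwise_insert.mpr ⟨hI.prop, fun w hw _ ↦ ⟨hno w hw, fun h ↦ hno w hw h.symm⟩⟩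

theorem isCover_one_indicator_compl {I : Set α} (hI : G.IsIndepSet I)
    (hne : Iᶜ.Nonempty) : IsCover G 1 (Iᶜ.indicator 1) := by
  refine ⟨?_, fun u w huw ↦ ?_⟩
  · obtain ⟨v, hv⟩ := hne
    exact Function.ne_iff.mpr ⟨v, by simp [hv]⟩
  · by_cases hu : u ∈ I
    · have hw : w ∉ I := fun hw ↦ hI hu hw huw.ne huw
      simp [hw]
    · simp [hu]

theorem isBasicCover_one_indicator_compl {I : Set α} (hI : Maximal G.IsIndepSet I)
    (hne : Iᶜ.Nonempty) : IsBasicCover G 1 (Iᶜ.indicator 1) := by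
  refine isBasicCover_of_forall_exists_tight (isCover_one_indicator_compl hI.prop hne) ?_
  intro v hv
  have hvI : v ∉ I := fun h ↦ hv (by simp [h])
  obtain ⟨w, hwI, hvw⟩ := hI.exists_adj_of_notMem hvI
  exact ⟨w, hvw, by simp [hvI, hwI]⟩

end

theorem basic_one_covers_give_square_general (G : SimpleGraph V) (i j : V)
    (h : ∀ a : V → ℕ, IsBasicCover G 1 a → a i + a j = 1) :
    ∀ i' j' : V, G.Adj i i' → G.Adj j j' → i' ≠ j' ∧ G.Adj i' j' := by
  intro i' j' hii' hjj'
  by_contra hcon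
  have hpair : G.IsIndepSet {i', j'} :=
    Set.pairwise_pair.mpr fun hne ↦ ⟨fun h' ↦ hcon ⟨hne, h'⟩, fun h' ↦ hcon ⟨hne, h'.symm⟩⟩
  obtain ⟨I, hsub, hI⟩ := Finite.exists_le_maximal hpair
  have hiI : i ∉ I := fun hi ↦ hI.prop hi (hsub (by simp)) hii'.ne hii'
  have hjI : j ∉ I := fun hj ↦ hI.prop hj (hsub (by simp)) hjj'.ne hjj'
  have hweight := h _ (isBasicCover_one_indicator_compl hI ⟨i, hiI⟩)
  simp [hiI, hjI] at hweight

/-- Let `{i, j}` be an edge of `G`.  If `a i + a j = 1` for every basic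
`1`-cover `a` of `G`, then for every neighbour `i'` of `i` and every neighbour `j'` of `j`
one has `i' ≠ j'` and `{i', j'}` is an edge of `G`. -/
theorem basic_one_covers_give_square (G : SimpleGraph V) (i j : V) (hij : G.Adj i j)
    (h : ∀ a : V → ℕ, IsBasicCover G 1 a → a i + a j = 1) :
    ∀ i' j' : V, G.Adj i i' → G.Adj j j' → i' ≠ j' ∧ G.Adj i' j' :=
  basic_one_covers_give_square_general G i j h
end

section
/- Let {i,j} be an edge of a finite simple graph G. Suppose that for every neighbor i' of i in G and every neighbor j' of j in G, one has i' ≠ j' and {i',j'} is an edge of G. Then for every integer k ≥ 1 and every basic k-cover a of G, a(i)+a(j)=k. -/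
variable {V : Type*} [Fintype V] [DecidableEq V]

/-!
Lowering a basic `k`-cover by one at a vertex `v` whose every incident edge has slack leaves a
`k`-cover, and the difference is a `0`-cover; hence at every non-isolated vertex of a basic
`k`-cover some incident edge is tight (at a zero of `a` because, by the same lowering, `a ≤ k`
on non-isolated vertices). Choosing tight edges `{i, y}` and `{j, z}`, the edge
`{y, z}` gives `(a i + a j) + k ≤ (a i + a y) + (a j + a z) = 2 k`.
-/

section

variable {α : Type*} {G : SimpleGraph α} {k : ℕ} {a : α → ℕ}

theorem isCover_zero_iff {c : α → ℕ} : IsCover G 0 c ↔ c ≠ 0 :=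
  ⟨And.left, fun hc => ⟨hc, fun _ _ _ => Nat.zero_le _⟩⟩

theorem IsCover.tsub_single [DecidableEq α] (ha : IsCover G k a) (hk : 1 ≤ k) {v w : α}
    (hvw : G.Adj v w) (hslack : ∀ u, G.Adj v u → k < a v + a u) :
    IsCover G k (a - Pi.single v 1) := by
  set b : α → ℕ := a - Pi.single v 1 with hb
  have hcover : ∀ x y, G.Adj x y → k ≤ b x + b y := by
    intro x y hxy
    rcases eq_or_ne x v with rfl | hx
    · have := hslack y hxy
      simp only [hb, Pi.sub_apply, Pi.single_eq_same, Pi.single_eq_of_ne hxy.ne', tsub_zero]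
      omega
    rcases eq_or_ne y v with rfl | hy
    · have := hslack x hxy.symm
      simp only [hb, Pi.sub_apply, Pi.single_eq_same, Pi.single_eq_of_ne hx, tsub_zero]
      omega
    · simpa only [hb, Pi.sub_apply, Pi.single_eq_of_ne hx, Pi.single_eq_of_ne hy, tsub_zero]
        using ha.2 x y hxy
  refine ⟨fun h0 => ?_, hcover⟩
  have := hcover v w hvw
  rw [h0] at this
  simp only [Pi.zero_apply, add_zero] at this
  omega

namespace IsBasicCover

theorem exists_tight_of_pos (ha : IsBasicCover G k a) (hk : 1 ≤ k) {v w : α}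
    (hvw : G.Adj v w) (hv : 0 < a v) : ∃ u, G.Adj v u ∧ a v + a u = k := by
  classical
  by_contra! htight
  have hslack : ∀ u, G.Adj v u → k < a v + a u := fun u hu =>
    (ha.1.2 v u hu).lt_of_ne (htight u hu).symm
  have hle : Pi.single v 1 ≤ a := fun x => by
    rcases eq_or_ne x v with rfl | hx
    · rw [Pi.single_eq_same]
      exact hv
    · simp only [Pi.single_eq_of_ne hx, Nat.zero_le]
  exact ha.2 ⟨a - Pi.single v 1, Pi.single v 1, ha.1.tsub_single hk hvw hslack,
    isCover_zero_iff.2 (by simp), (tsub_add_cancel_of_le hle).symm⟩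

theorem le_of_adj (ha : IsBasicCover G k a) (hk : 1 ≤ k) {v w : α} (hvw : G.Adj v w) :
    a v ≤ k := by
  by_contra! hv
  obtain ⟨u, -, hu⟩ := ha.exists_tight_of_pos hk hvw (by omega)
  omega

theorem exists_tight (ha : IsBasicCover G k a) (hk : 1 ≤ k) {v w : α} (hvw : G.Adj v w) :
    ∃ u, G.Adj v u ∧ a v + a u = k := by
  rcases Nat.eq_zero_or_pos (a v) with hv | hv
  · refine ⟨w, hvw, le_antisymm ?_ (ha.1.2 v w hvw)⟩
    rw [hv, zero_add]
    exact ha.le_of_adj hk hvw.symm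
  · exact ha.exists_tight_of_pos hk hvw hv

end IsBasicCover

end

/-- Let `{i, j}` be an edge of `G`.  If for every neighbour `i'` of `i` and
every neighbour `j'` of `j` one has `i' ≠ j'` and `{i', j'}` is an edge of `G`, then for
every `k ≥ 1` and every basic `k`-cover `a` of `G`, `a i + a j = k`. -/
theorem square_gives_basic_cover_values (G : SimpleGraph V) (i j : V) (hij : G.Adj i j)
    (h : ∀ i' j' : V, G.Adj i i' → G.Adj j j' → i' ≠ j' ∧ G.Adj i' j') :
    ∀ k : ℕ, 1 ≤ k → ∀ a : V → ℕ, IsBasicCover G k a → a i + a j = k := by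
  intro k hk a ha
  obtain ⟨y, hy, hiy⟩ := ha.exists_tight hk hij
  obtain ⟨z, hz, hjz⟩ := ha.exists_tight hk hij.symm
  have hyz := ha.1.2 y z (h y z hy hz).2
  have hij' := ha.1.2 i j hij
  omega
end

section
/- A finite simple graph G is a domain if and only if G has at least one edge and for each non-isolated vertex i of G there exists a neighbor j of i such that: a(i)+a(j)=1 for every basic 1-cover a of G, and b(i)+b(j)=2 for every basic 2-cover b of G. -/
variable {V : Type*} [Fintype V] [DecidableEq V]

/-!
A basic `k`-cover `a` with `a v ≠ 0` cannot be lowered at `v`, so either `a` is the indicator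
of `v` or some edge `{v, j}` is tight: `a v + a j = k`. Conversely a cover that is tight along
an edge at every vertex where it is positive is basic, since lowering it anywhere breaks that
edge.

For a domain, add up *all* basic `1`-covers and `2`-covers (there are finitely many, as their
values are at most `k`). The sum is basic, hence tight along some edge `{i, j}` at any
non-isolated `i`; since every summand covers `{i, j}`, every summand is tight there. Conversely,
under the vertexwise condition every sum of basic `1`- and `2`-covers is tight along such an
edge at each vertex where it is positive, hence basic.
-/

section Covers

variable {G : SimpleGraph V} {k : ℕ} {a : V → ℕ} {v x y : V}

omit [Fintype V] [DecidableEq V] in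
lemma isCover_zero_of_ne_zero (ha : a ≠ 0) : IsCover G 0 a :=
  ⟨ha, fun _ _ _ => Nat.zero_le _⟩

omit [Fintype V] [DecidableEq V] in
lemma isBasicCover_of_forall_exists_adj_add_eq (ha : IsCover G k a)
    (htight : ∀ v, a v ≠ 0 → ∃ j, G.Adj v j ∧ a v + a j = k) : IsBasicCover G k a := by
  refine ⟨ha, ?_⟩
  rintro ⟨b, c, hb, hc, rfl⟩
  obtain ⟨v, hv⟩ := Function.ne_iff.mp hc.1
  simp only [Pi.zero_apply] at hv
  obtain ⟨j, hvj, hj⟩ := htight v (by simp only [Pi.add_apply]; omega)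
  have := hb.2 v j hvj
  simp only [Pi.add_apply] at hj
  omega

omit [Fintype V] in
lemma IsBasicCover.eq_single_or_exists_adj_add_le (ha : IsBasicCover G k a) (hv : a v ≠ 0) :
    a = Pi.single v 1 ∨ ∃ j, G.Adj v j ∧ a v + a j ≤ k := by
  by_contra! h
  obtain ⟨hne, hloose⟩ := h
  have hle : Pi.single v 1 ≤ a := by
    intro w
    rcases eq_or_ne w v with rfl | hw
    · simpa using Nat.one_le_iff_ne_zero.mpr hv
    · simp [hw]
  refine ha.2 ⟨a - Pi.single v 1, Pi.single v 1, ⟨fun h0 => ?_, fun i j hij => ?_⟩,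
    isCover_zero_of_ne_zero (by simp), (tsub_add_cancel_of_le hle).symm⟩
  · exact hne (le_antisymm (tsub_eq_zero_iff_le.mp h0) hle)
  · have hcov := ha.1.2 i j hij
    simp only [Pi.sub_apply, Pi.single_apply]
    rcases eq_or_ne i v with rfl | hi
    · have := hloose j hij
      simp only [↓reduceIte, hij.ne', tsub_zero]
      omega
    · rcases eq_or_ne j v with rfl | hj
      · have := hloose i hij.symm
        simp only [hi, ↓reduceIte, tsub_zero]
        omega
      · simpa [hi, hj] using hcov

omit [Fintype V] in
lemma IsBasicCover.apply_le (hk : k ≠ 0) (ha : IsBasicCover G k a) (v : V) : a v ≤ k := by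
  by_contra! hlt
  rcases ha.eq_single_or_exists_adj_add_le (v := v) (by omega) with rfl | ⟨j, -, hj⟩
  · simp only [Pi.single_eq_same] at hlt
    omega
  · omega

omit [Fintype V] in
lemma IsBasicCover.exists_adj_add_eq (hk : k ≠ 0) (ha : IsBasicCover G k a) (hvx : G.Adj v x) :
    ∃ j, G.Adj v j ∧ a v + a j = k := by
  by_cases hv : a v = 0
  · have := ha.1.2 v x hvx
    have := ha.apply_le hk x
    exact ⟨x, hvx, by omega⟩
  rcases ha.eq_single_or_exists_adj_add_le hv with rfl | ⟨j, hvj, hj⟩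
  · refine ⟨x, hvx, ?_⟩
    have := ha.1.2 v x hvx
    simp only [Pi.single_eq_same, Pi.single_eq_of_ne hvx.ne', add_zero] at this ⊢
    omega
  · exact ⟨j, hvj, le_antisymm hj (ha.1.2 v j hvj)⟩

omit [Fintype V] in
lemma IsBasicCover.exists_adj_of_ne_zero (hk : k ≠ 0) (hxy : G.Adj x y)
    (ha : IsBasicCover G k a) (hv : a v ≠ 0) : ∃ w, G.Adj v w := by
  rcases ha.eq_single_or_exists_adj_add_le hv with rfl | ⟨j, hvj, -⟩
  · have := ha.1.2 x y hxy
    rcases eq_or_ne x v with rfl | hx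
    · exact ⟨y, hxy⟩
    rcases eq_or_ne y v with rfl | hy
    · exact ⟨x, hxy.symm⟩
    simp only [Pi.single_eq_of_ne hx, Pi.single_eq_of_ne hy, add_zero] at this
    omega
  · exact ⟨j, hvj⟩

lemma finite_setOf_isBasicCover (G : SimpleGraph V) (hk : k ≠ 0) :
    {a | IsBasicCover G k a}.Finite :=
  (Set.Finite.pi fun _ => Set.finite_Iic k).subset fun _ ha =>
    Set.mem_univ_pi.mpr fun v => ha.apply_le hk v

omit [DecidableEq V] in
lemma sum_apply_ne_zero (ha : a ≠ 0) : ∑ v, a v ≠ 0 :=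
  fun h => ha (funext fun v => Finset.sum_eq_zero_iff.mp h v (Finset.mem_univ v))

omit [DecidableEq V] in
lemma exists_isBasicCover [Nonempty V] (G : SimpleGraph V) (hk : k ≠ 0) :
    ∃ a, IsBasicCover G k a := by
  obtain ⟨a, ha, hmin⟩ := (measure fun a : V → ℕ => ∑ v, a v).wf.has_min {a | IsCover G k a}
    ⟨fun _ => k, Function.const_ne_zero.mpr hk, fun _ _ _ => Nat.le_add_left k k⟩
  refine ⟨a, ha, fun ⟨b, c, hb, hc, hbc⟩ => hmin b hb ?_⟩
  have := sum_apply_ne_zero hc.1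
  change ∑ v, b v < ∑ v, a v
  simp only [hbc, Pi.add_apply, Finset.sum_add_distrib]
  omega

end Covers

section Sums

variable {ι κ : Type*}

omit [Fintype V] [DecidableEq V] in
lemma sum_add_sum_apply_add_apply (S : Finset ι) (T : Finset κ) (f : ι → V → ℕ)
    (g : κ → V → ℕ) (v w : V) :
    (∑ p ∈ S, f p + ∑ q ∈ T, g q) v + (∑ p ∈ S, f p + ∑ q ∈ T, g q) w =
      ∑ p ∈ S, (f p v + f p w) + ∑ q ∈ T, (g q v + g q w) := by
  simp only [Pi.add_apply, Finset.sum_apply, Finset.sum_add_distrib]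
  ring

lemma forall_eq_of_sum_add_sum_eq {S : Finset ι} {T : Finset κ} {u : ι → ℕ} {w : κ → ℕ}
    {m n : ℕ} (hu : ∀ p ∈ S, m ≤ u p) (hw : ∀ q ∈ T, n ≤ w q)
    (h : ∑ p ∈ S, u p + ∑ q ∈ T, w q = S.card * m + T.card * n) :
    (∀ p ∈ S, u p = m) ∧ ∀ q ∈ T, w q = n := by
  have hS : ∑ p ∈ S, m ≤ ∑ p ∈ S, u p := Finset.sum_le_sum hu
  have hT : ∑ q ∈ T, n ≤ ∑ q ∈ T, w q := Finset.sum_le_sum hw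
  simp only [Finset.sum_const, smul_eq_mul] at hS hT
  refine ⟨fun p hp => ((Finset.sum_eq_sum_iff_of_le hu).mp ?_ p hp).symm,
    fun q hq => ((Finset.sum_eq_sum_iff_of_le hw).mp ?_ q hq).symm⟩
  all_goals simp only [Finset.sum_const, smul_eq_mul]; omega

end Sums

section Domain

variable {G : SimpleGraph V} {i x y : V}

omit [Fintype V] [DecidableEq V] in
lemma IsGraphDomain.isBasicCover_sum_add_sum (h : IsGraphDomain G) {S T : Finset (V → ℕ)}
    (hST : 1 ≤ S.card + T.card) (hS : ∀ a ∈ S, IsBasicCover G 1 a)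
    (hT : ∀ b ∈ T, IsBasicCover G 2 b) :
    IsBasicCover G (S.card + 2 * T.card) (∑ a ∈ S, a + ∑ b ∈ T, b) := by
  have key := h S.card T.card hST (fun p => S.equivFin.symm p) (fun q => T.equivFin.symm q)
    (fun p => hS _ (S.equivFin.symm p).2) (fun q => hT _ (T.equivFin.symm q).2)
  rwa [Equiv.sum_comp S.equivFin.symm Subtype.val, Equiv.sum_comp T.equivFin.symm Subtype.val,
    Finset.sum_coe_sort S (fun a => a), Finset.sum_coe_sort T (fun b => b)] at key

lemma IsGraphDomain.exists_adj_s4 [Nonempty V] (h : IsGraphDomain G) : ∃ i j, G.Adj i j := by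
  by_contra! hno
  obtain ⟨v⟩ := ‹Nonempty V›
  have hcover : ∀ {k} {a : V → ℕ}, a ≠ 0 → IsCover G k a :=
    fun ha => ⟨ha, fun i j hij => absurd hij (hno i j)⟩
  have hsingle : Pi.single v 1 ≠ (0 : V → ℕ) := by simp
  have hbasic : IsBasicCover G 1 (Pi.single v 1) := by
    refine ⟨hcover hsingle, ?_⟩
    rintro ⟨b, c, hb, hc, hbc⟩
    have hweight := congrArg (fun a : V → ℕ => ∑ w, a w) hbc
    simp only [Finset.sum_pi_single', Finset.mem_univ, if_true, Pi.add_apply,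
      Finset.sum_add_distrib] at hweight
    have := sum_apply_ne_zero hb.1
    have := sum_apply_ne_zero hc.1
    omega
  have hdouble := h 2 0 (by norm_num) (fun _ => Pi.single v 1) Fin.elim0 (fun _ => hbasic)
    (fun q => q.elim0)
  refine hdouble.2 ⟨Pi.single v 1, Pi.single v 1, hcover hsingle,
    isCover_zero_of_ne_zero hsingle, ?_⟩
  simp [two_mul]

lemma IsGraphDomain.exists_adj_forall_add_eq (h : IsGraphDomain G) (hix : G.Adj i x) :
    ∃ j, G.Adj i j ∧ (∀ a, IsBasicCover G 1 a → a i + a j = 1) ∧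
      ∀ b, IsBasicCover G 2 b → b i + b j = 2 := by
  have : Nonempty V := ⟨i⟩
  set S := (finite_setOf_isBasicCover G one_ne_zero).toFinset
  set T := (finite_setOf_isBasicCover G two_ne_zero).toFinset
  have hS : ∀ a, a ∈ S ↔ IsBasicCover G 1 a := by simp [S]
  have hT : ∀ b, b ∈ T ↔ IsBasicCover G 2 b := by simp [T]
  obtain ⟨a₀, ha₀⟩ := exists_isBasicCover G one_ne_zero
  have hcard : 1 ≤ S.card := Finset.card_pos.mpr ⟨a₀, (hS a₀).mpr ha₀⟩
  have hsum := h.isBasicCover_sum_add_sum (by omega) (fun a => (hS a).mp) (fun b => (hT b).mp)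
  obtain ⟨j, hij, hj⟩ := hsum.exists_adj_add_eq (by omega) hix
  rw [sum_add_sum_apply_add_apply S T (fun a => a) (fun b => b)] at hj
  obtain ⟨h1, h2⟩ := forall_eq_of_sum_add_sum_eq (m := 1) (n := 2)
    (fun a ha => ((hS a).mp ha).1.2 i j hij) (fun b hb => ((hT b).mp hb).1.2 i j hij)
    (by simpa [mul_comm] using hj)
  exact ⟨j, hij, fun a ha => h1 a ((hS a).mpr ha), fun b hb => h2 b ((hT b).mpr hb)⟩

omit [Fintype V] in
lemma isGraphDomain_of_forall_exists_adj (hxy : G.Adj x y)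
    (htight : ∀ i, (∃ x, G.Adj i x) → ∃ j, G.Adj i j ∧
      (∀ a, IsBasicCover G 1 a → a i + a j = 1) ∧ ∀ b, IsBasicCover G 2 b → b i + b j = 2) :
    IsGraphDomain G := by
  intro s t hst f g hf hg
  have hpair := sum_add_sum_apply_add_apply Finset.univ Finset.univ f g
  have hcover : ∀ v w, G.Adj v w → s + 2 * t ≤
      (∑ p, f p + ∑ q, g q) v + (∑ p, f p + ∑ q, g q) w := by
    intro v w hvw
    have h1 : ∑ _p : Fin s, 1 ≤ ∑ p, (f p v + f p w) :=
      Finset.sum_le_sum fun p _ => (hf p).1.2 v w hvw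
    have h2 : ∑ _q : Fin t, 2 ≤ ∑ q, (g q v + g q w) :=
      Finset.sum_le_sum fun q _ => (hg q).1.2 v w hvw
    simp only [Finset.sum_const, Finset.card_univ, Fintype.card_fin, smul_eq_mul] at h1 h2
    rw [hpair]
    omega
  refine isBasicCover_of_forall_exists_adj_add_eq ⟨fun h0 => ?_, hcover⟩ fun v hv => ?_
  · have := hcover x y hxy
    simp only [h0, Pi.zero_apply] at this
    omega
  have hnbr : ∃ w, G.Adj v w := by
    simp only [Pi.add_apply, Finset.sum_apply] at hv
    by_cases hfv : ∑ p, f p v = 0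
    · obtain ⟨q, -, hq⟩ := Finset.exists_ne_zero_of_sum_ne_zero (by omega : ∑ q, g q v ≠ 0)
      exact (hg q).exists_adj_of_ne_zero two_ne_zero hxy hq
    · obtain ⟨p, -, hp⟩ := Finset.exists_ne_zero_of_sum_ne_zero hfv
      exact (hf p).exists_adj_of_ne_zero one_ne_zero hxy hp
  obtain ⟨j, hvj, h1, h2⟩ := htight v hnbr
  refine ⟨j, hvj, ?_⟩
  rw [hpair, Finset.sum_congr rfl fun p _ => h1 _ (hf p),
    Finset.sum_congr rfl fun q _ => h2 _ (hg q)]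
  simp [mul_comm]

end Domain

/-- `G` is a domain if and only if `G` has at least one edge and each
non-isolated vertex `i` has a neighbour `j` with `a i + a j = 1` for every basic `1`-cover
`a` and `b i + b j = 2` for every basic `2`-cover `b`. -/
theorem domain_iff_vertexwise [Nonempty V] (G : SimpleGraph V) :
    IsGraphDomain G ↔
      (∃ i j : V, G.Adj i j) ∧
        ∀ i : V, (∃ x, G.Adj i x) →
          ∃ j : V, G.Adj i j ∧
            (∀ a : V → ℕ, IsBasicCover G 1 a → a i + a j = 1) ∧
            (∀ b : V → ℕ, IsBasicCover G 2 b → b i + b j = 2) := by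
  refine ⟨fun h => ⟨h.exists_adj_s4, fun i ⟨x, hix⟩ => h.exists_adj_forall_add_eq hix⟩, ?_⟩
  rintro ⟨⟨x, y, hxy⟩, htight⟩
  exact isGraphDomain_of_forall_exists_adj hxy htight
end

section
/- Let G be a connected finite simple graph. Then G satisfies SC if and only if G is either a single vertex or a complete bipartite graph K_{a,b} for some integers b ≥ a ≥ 1 (i.e., the vertex set of G can be partitioned into two nonempty parts A and B such that the edges of G are exactly the pairs {x,y} with x ∈ A and y ∈ B). -/
variable {V : Type*} [Fintype V] [DecidableEq V]

/-!
For an edge `uv`, SC says that `N(u)` and `N(v)` are disjoint, that every vertex of `N(u)` is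
adjacent to every vertex of `N(v)`, and that a neighbour of a vertex of `N(u)` lies in `N(v)`
(and vice versa). So `N(u) ∪ N(v)` is closed under adjacency, hence is everything when `G` is
connected, and `G` is complete bipartite between `N(u)` and `N(v)`. Conversely, in a complete
bipartite graph the far ends of two edges leaving an edge `ij` lie in opposite parts.
-/

section

variable {α : Type*} {G : SimpleGraph α} {u v x y : α}

theorem SimpleGraph.Preconnected.eq_univ_of_adj_mem (hG : G.Preconnected) {s : Set α}
    (hs : s.Nonempty) (h : ∀ x y, x ∈ s → G.Adj x y → y ∈ s) : s = Set.univ := by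
  obtain ⟨x, hx⟩ := hs
  refine Set.eq_univ_of_forall fun z => ?_
  induction (SimpleGraph.reachable_iff_reflTransGen x z).1 (hG x z) with
  | refl => exact hx
  | tail _ hyz ih => exact h _ _ ih hyz

def IsCompleteBetween (G : SimpleGraph α) (A B : Set α) : Prop :=
  ∀ x y, G.Adj x y ↔ (x ∈ A ∧ y ∈ B) ∨ (x ∈ B ∧ y ∈ A)

namespace IsCompleteBetween

variable {A B : Set α}

theorem symm (h : IsCompleteBetween G A B) : IsCompleteBetween G B A :=
  fun x y => (h x y).trans or_comm

theorem mem_right (h : IsCompleteBetween G A B) (hAB : Disjoint A B) (hx : x ∈ A)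
    (hxy : G.Adj x y) : y ∈ B := by
  rcases (h x y).1 hxy with ⟨-, hy⟩ | ⟨hx', -⟩
  · exact hy
  · exact absurd hx' (Set.disjoint_left.1 hAB hx)

theorem satisfiesSC (h : IsCompleteBetween G A B) (hAB : Disjoint A B) : SatisfiesSC G := by
  suffices key : ∀ {A B : Set α}, IsCompleteBetween G A B → Disjoint A B →
      ∀ i j i' j', i ∈ A → G.Adj i j → G.Adj i i' → G.Adj j j' → i' ≠ j' ∧ G.Adj i' j' by
    intro i j i' j' hij
    rcases (h i j).1 hij with ⟨hi, -⟩ | ⟨hi, -⟩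
    · exact key h hAB i j i' j' hi hij
    · exact key h.symm hAB.symm i j i' j' hi hij
  intro A B h hAB i j i' j' hi hij hii' hjj'
  have hi' : i' ∈ B := h.mem_right hAB hi hii'
  have hj' : j' ∈ A := h.symm.mem_right hAB.symm (h.mem_right hAB hi hij) hjj'
  exact ⟨fun e => Set.disjoint_left.1 hAB hj' (e ▸ hi'), (h i' j').2 (.inr ⟨hi', hj'⟩)⟩

end IsCompleteBetween

theorem satisfiesSC_of_subsingleton [Subsingleton α] (G : SimpleGraph α) : SatisfiesSC G :=
  fun i j _ _ hij => absurd (Subsingleton.elim i j) hij.ne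

namespace SatisfiesSC

variable (hsc : SatisfiesSC G)
include hsc

theorem disjoint_neighborSet (huv : G.Adj u v) :
    Disjoint (G.neighborSet u) (G.neighborSet v) :=
  Set.disjoint_left.2 fun z hu hv => (hsc u v z z huv hu hv).1 rfl

theorem mem_neighborSet_of_adj (huv : G.Adj u v) (hx : x ∈ G.neighborSet u)
    (hxy : G.Adj x y) : y ∈ G.neighborSet v :=
  (hsc u x v y hx huv hxy).2

theorem neighborSet_union_eq_univ (hG : G.Preconnected) (huv : G.Adj u v) :
    G.neighborSet u ∪ G.neighborSet v = Set.univ := by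
  refine hG.eq_univ_of_adj_mem ⟨v, .inl huv⟩ fun x y hx hxy => ?_
  rcases hx with hx | hx
  · exact .inr (hsc.mem_neighborSet_of_adj huv hx hxy)
  · exact .inl (hsc.mem_neighborSet_of_adj huv.symm hx hxy)

theorem isCompleteBetween_neighborSet (hG : G.Preconnected) (huv : G.Adj u v) :
    IsCompleteBetween G (G.neighborSet u) (G.neighborSet v) := by
  intro x y
  constructor
  · intro hxy
    rcases (hsc.neighborSet_union_eq_univ hG huv).ge (Set.mem_univ x) with hx | hx
    · exact .inl ⟨hx, hsc.mem_neighborSet_of_adj huv hx hxy⟩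
    · exact .inr ⟨hx, hsc.mem_neighborSet_of_adj huv.symm hx hxy⟩
  · rintro (⟨hx, hy⟩ | ⟨hx, hy⟩)
    · exact (hsc u v x y huv hx hy).2
    · exact (hsc u v y x huv hy hx).2.symm

end SatisfiesSC

end

/-- A connected graph `G` satisfies SC if and only if `G` is a single vertex or
a complete bipartite graph `K_{a,b}` with `b ≥ a ≥ 1` (i.e. the vertices can be partitioned
into two nonempty parts `A` and `B` such that the edges of `G` are exactly the pairs
`{x, y}` with `x ∈ A` and `y ∈ B`). -/
theorem sc_iff_point_or_complete_bipartite (G : SimpleGraph V) (hconn : G.Connected) :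
    SatisfiesSC G ↔
      (Fintype.card V = 1 ∨
        ∃ A B : Set V, A.Nonempty ∧ B.Nonempty ∧ A ∪ B = Set.univ ∧ Disjoint A B ∧
          ∀ x y : V, G.Adj x y ↔ (x ∈ A ∧ y ∈ B) ∨ (x ∈ B ∧ y ∈ A)) := by
  constructor
  · intro hsc
    rcases subsingleton_or_nontrivial V with hV | hV
    · have := hconn.nonempty
      exact .inl (le_antisymm (Fintype.card_le_one_iff_subsingleton.2 hV) Fintype.card_pos)
    · obtain ⟨v, huv⟩ := hconn.preconnected.exists_adj_of_nontrivial hconn.nonempty.some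
      exact .inr ⟨_, _, ⟨v, huv⟩, ⟨_, huv.symm⟩,
        hsc.neighborSet_union_eq_univ hconn.preconnected huv, hsc.disjoint_neighborSet huv,
        hsc.isCompleteBetween_neighborSet hconn.preconnected huv⟩
  · rintro (hcard | ⟨A, B, -, -, -, hAB, hadj⟩)
    · have := Fintype.card_le_one_iff_subsingleton.1 hcard.le
      exact satisfiesSC_of_subsingleton G
    · exact IsCompleteBetween.satisfiesSC hadj hAB
end

section
/- Let G be a finite simple graph with at least one edge. Then the graph G^{0-1} satisfies SC. -/
variable {V : Type*} [Fintype V] [DecidableEq V]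

/-
If `{i, j}` is an edge of `G^{0-1}` and `i'`, `j'` are neighbours of `i`, `j` there, then
`b i' + b j' = 1` for every basic `1`-cover `b`, as `b i' + b i = b i + b j = b j + b j' = 1`.
But if `{i', j'}` were independent in `G` (and missed some vertex), the indicator of its
complement would be a `1`-cover vanishing at `i'` and `j'`, and so would any basic `1`-cover
below it.
-/

omit [DecidableEq V] in
theorem IsCover.exists_isBasicCover_le {G : SimpleGraph V} {k : ℕ} {a : V → ℕ}
    (ha : IsCover G k a) : ∃ b, IsBasicCover G k b ∧ b ≤ a := by
  induction hn : ∑ v, a v using Nat.strong_induction_on generalizing a with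
  | _ n ih =>
    by_cases hbasic : IsBasicCover G k a
    · exact ⟨a, hbasic, le_rfl⟩
    obtain ⟨b, c, hb, hc, rfl⟩ : ∃ b c, IsCover G k b ∧ IsCover G 0 c ∧ a = b + c := by
      by_contra hsplit
      exact hbasic ⟨ha, hsplit⟩
    have hc_pos : 0 < ∑ v, c v := by
      obtain ⟨v, hv⟩ := Function.ne_iff.mp hc.1
      exact (Nat.pos_of_ne_zero hv).trans_le (Finset.single_le_sum (by simp) (Finset.mem_univ v))
    have hlt : ∑ v, b v < n := by
      rw [← hn, Pi.add_def, Finset.sum_add_distrib]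
      omega
    obtain ⟨d, hd, hdb⟩ := ih _ hlt hb rfl
    exact ⟨d, hd, hdb.trans le_self_add⟩

omit [Fintype V] [DecidableEq V] in
theorem isCover_indicator_compl {G : SimpleGraph V} {k : ℕ} (hk : k ≠ 0) {s : Set V}
    (hs : G.IsIndepSet s) {v : V} (hv : v ∉ s) : IsCover G k (sᶜ.indicator fun _ ↦ k) := by
  refine ⟨Function.ne_iff.mpr ⟨v, by simpa [hv] using hk⟩, fun i j hij ↦ ?_⟩
  by_cases hi : i ∈ s <;> by_cases hj : j ∈ s
  · exact absurd hij (hs hi hj hij.ne)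
  all_goals simp [hi, hj]

omit [DecidableEq V] in
theorem exists_isBasicCover_eq_zero_on_indepSet {G : SimpleGraph V} {k : ℕ} (hk : k ≠ 0)
    {s : Set V} (hs : G.IsIndepSet s) {v : V} (hv : v ∉ s) :
    ∃ b, IsBasicCover G k b ∧ ∀ u ∈ s, b u = 0 := by
  obtain ⟨b, hb, hba⟩ := (isCover_indicator_compl hk hs hv).exists_isBasicCover_le
  exact ⟨b, hb, fun u hu ↦ Nat.eq_zero_of_le_zero (by simpa [hu] using hba u)⟩

theorem zeroOne_satisfies_sc_general (G : SimpleGraph V) :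
    SatisfiesSC (ZeroOne G) := by
  rintro i j i' j' ⟨-, hcij⟩ ⟨hii', hcii'⟩ ⟨-, hcjj'⟩
  have hsum : ∀ b, IsBasicCover G 1 b → b i' + b j' = 1 := fun b hb ↦ by
    have := hcij b hb
    have := hcii' b hb
    have := hcjj' b hb
    omega
  have hadj : G.Adj i' j' := by
    by_cases hj'i : j' = i
    · exact hj'i ▸ hii'.symm
    by_contra hnadj
    have hindep : G.IsIndepSet {i', j'} :=
      Set.pairwise_pair.mpr fun _ ↦ ⟨hnadj, fun h ↦ hnadj h.symm⟩
    obtain ⟨b, hb, hb0⟩ :=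
      exists_isBasicCover_eq_zero_on_indepSet one_ne_zero hindep (v := i)
        (by simp [hii'.ne, Ne.symm hj'i])
    simpa [hb0] using hsum b hb
  exact ⟨hadj.ne, hadj, hsum⟩

/-- If `G` has at least one edge, then the graph `G^{0-1}` satisfies SC. -/
theorem zeroOne_satisfies_sc (G : SimpleGraph V) (h : ∃ i j : V, G.Adj i j) :
    SatisfiesSC (ZeroOne G) :=
  zeroOne_satisfies_sc_general G
end

section
/- Let G be a finite simple graph that is a domain, and let i, j, k be three mutually adjacent vertices of G (a triangle). Then none of the three edges {i,j}, {j,k}, {i,k} is an edge of G^{0-1}. -/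
variable {V : Type*} [Fintype V] [DecidableEq V]

/-! Every cover dominates a basic one, so the cover that is `0` at a vertex `z` and `1` elsewhere
yields a basic `1`-cover vanishing at `z`. For a triangle `i, j, k`, such a cover vanishing at `k`
is positive at both `i` and `j`, hence sums to `2` on the edge `{i, j}`. -/

namespace IsCover

variable {W : Type*} [Fintype W] {G : SimpleGraph W} {k : ℕ}

theorem exists_isBasicCover_le_s8 {a : W → ℕ} (ha : IsCover G k a) :
    ∃ b, IsBasicCover G k b ∧ b ≤ a := by
  induction hn : ∑ v, a v using Nat.strong_induction_on generalizing a with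
  | _ n ih =>
    by_cases hbasic : IsBasicCover G k a
    · exact ⟨a, hbasic, le_rfl⟩
    obtain ⟨b, c, hb, hc, rfl⟩ : ∃ b c, IsCover G k b ∧ IsCover G 0 c ∧ a = b + c := by
      by_contra h
      exact hbasic ⟨ha, h⟩
    obtain ⟨v, hv⟩ := Function.ne_iff.mp hc.1
    have hlt : ∑ v, b v < n := by
      rw [← hn]
      simp only [Pi.add_apply, Finset.sum_add_distrib]
      exact Nat.lt_add_of_pos_right
        (Finset.sum_pos' (fun _ _ => Nat.zero_le _) ⟨v, Finset.mem_univ v, Nat.pos_of_ne_zero hv⟩)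
    obtain ⟨d, hd, hdb⟩ := ih _ hlt hb rfl
    exact ⟨d, hd, hdb.trans le_self_add⟩

end IsCover

lemma exists_isBasicCover_one_eq_zero {G : SimpleGraph V} {z w : V} (hzw : G.Adj z w) :
    ∃ c, IsBasicCover G 1 c ∧ c z = 0 := by
  have hcover : IsCover G 1 (fun v => if v = z then 0 else 1) := by
    refine ⟨fun h => by simpa [hzw.ne'] using congrFun h w, fun a b hab => ?_⟩
    by_cases ha : a = z
    · subst ha
      simp [hab.ne']
    · simp [ha]
  obtain ⟨c, hc, hle⟩ := hcover.exists_isBasicCover_le_s8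
  exact ⟨c, hc, Nat.eq_zero_of_le_zero (by simpa using hle z)⟩

lemma not_zeroOne_adj_of_adj_of_adj {G : SimpleGraph V} {x y z : V}
    (hxz : G.Adj x z) (hyz : G.Adj y z) : ¬ (ZeroOne G).Adj x y := by
  rintro ⟨-, hall⟩
  obtain ⟨c, hc, hcz⟩ := exists_isBasicCover_one_eq_zero hxz.symm
  have hx := hc.1.2 x z hxz
  have hy := hc.1.2 y z hyz
  have hxy := hall c hc
  omega

theorem triangle_edges_not_in_zeroOne_general (G : SimpleGraph V)
    (i j k : V) (hij : G.Adj i j) (hjk : G.Adj j k) (hik : G.Adj i k) :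
    ¬ (ZeroOne G).Adj i j ∧ ¬ (ZeroOne G).Adj j k ∧ ¬ (ZeroOne G).Adj i k :=
  ⟨not_zeroOne_adj_of_adj_of_adj hik hjk,
    not_zeroOne_adj_of_adj_of_adj hij.symm hik.symm,
    not_zeroOne_adj_of_adj_of_adj hij hjk.symm⟩

/-- If `G` is a domain and `i, j, k` form a triangle in `G`, then none of the
three edges `{i, j}`, `{j, k}`, `{i, k}` is an edge of `G^{0-1}`. -/
theorem triangle_edges_not_in_zeroOne (G : SimpleGraph V) (hG : IsGraphDomain G)
    (i j k : V) (hij : G.Adj i j) (hjk : G.Adj j k) (hik : G.Adj i k) :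
    ¬ (ZeroOne G).Adj i j ∧ ¬ (ZeroOne G).Adj j k ∧ ¬ (ZeroOne G).Adj i k :=
  triangle_edges_not_in_zeroOne_general G i j k hij hjk hik
end

section
/- Let G be a finite simple graph with at least one vertex and no isolated vertices. If for every integer k ≥ 1 all basic k-covers of G have the same norm, then G is an unmixed domain (i.e., G is unmixed and G is a domain). -/
variable {V : Type*} [Fintype V] [DecidableEq V]

/-! Any cover dominates a basic cover, so every `k`-cover has norm at least that of some
basic `k`-cover. If `c` is a basic `1`-cover, then `k • c` is a basic `k`-cover: every vertex in
the support of `c` lies on an edge on which `c` sums to exactly `1`, so nothing can be split off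
`k • c`. Hence, when basic `k`-covers have equal norms, all of them have norm `k * |c|`. A sum of
`s` basic `1`-covers and `t` basic `2`-covers is an `(s + 2t)`-cover of this same norm, and
splitting off a nonzero `0`-cover would leave an `(s + 2t)`-cover dominating a basic one of
smaller norm. -/

namespace IsCover

omit [DecidableEq V]

variable {G : SimpleGraph V} {k : ℕ} {a : V → ℕ}

theorem norm_pos (ha : IsCover G k a) : 0 < ∑ v, a v :=
  Nat.pos_of_ne_zero fun h0 => ha.1 <| funext fun v => Finset.sum_eq_zero_iff.mp h0 v (by simp)

theorem exists_isBasicCover_norm_le (ha : IsCover G k a) :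
    ∃ b, IsBasicCover G k b ∧ ∑ v, b v ≤ ∑ v, a v := by
  induction hn : ∑ v, a v using Nat.strong_induction_on generalizing a with
  | _ n ih =>
    by_cases hbasic : IsBasicCover G k a
    · exact ⟨a, hbasic, hn.le⟩
    obtain ⟨b, d, hb, hd, rfl⟩ := not_not.mp fun hsplit => hbasic ⟨ha, hsplit⟩
    have hnorm : ∑ v, (b + d) v = ∑ v, b v + ∑ v, d v := Finset.sum_add_distrib
    have hd_pos := hd.norm_pos
    obtain ⟨b', hb', hle⟩ := ih _ (by omega) hb rfl
    exact ⟨b', hb', by omega⟩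

theorem isBasicCover_of_norm_eq {N : ℕ} (ha : IsCover G k a)
    (hN : ∀ b, IsBasicCover G k b → ∑ v, b v = N) (haN : ∑ v, a v = N) : IsBasicCover G k a := by
  refine ⟨ha, ?_⟩
  rintro ⟨b, d, hb, hd, rfl⟩
  obtain ⟨b', hb', hle⟩ := hb.exists_isBasicCover_norm_le
  have hnorm : ∑ v, (b + d) v = ∑ v, b v + ∑ v, d v := Finset.sum_add_distrib
  have := hd.norm_pos
  have := hN b' hb'
  omega

end IsCover

omit [Fintype V] [DecidableEq V] in
theorem le_sum_apply_add_sum_apply {ι : Type*} {G : SimpleGraph V} {s : Finset ι}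
    {k : ι → ℕ} {f : ι → V → ℕ} (hf : ∀ p ∈ s, IsCover G (k p) (f p)) {i j : V}
    (hij : G.Adj i j) :
    ∑ p ∈ s, k p ≤ (∑ p ∈ s, f p) i + (∑ p ∈ s, f p) j := by
  simp only [Finset.sum_apply, ← Finset.sum_add_distrib]
  exact Finset.sum_le_sum fun p hp => (hf p hp).2 i j hij

namespace IsBasicCover

omit [Fintype V]

variable {G : SimpleGraph V} {k : ℕ} {b : V → ℕ}

theorem not_isCover_update_pred (hb : IsBasicCover G k b) {v : V} (hv : 1 ≤ b v) :
    ¬ IsCover G k (Function.update b v (b v - 1)) := by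
  refine fun hcov => hb.2 ⟨_, Pi.single v 1, hcov, ⟨by simp, fun _ _ _ => Nat.zero_le _⟩, ?_⟩
  funext u
  by_cases hu : u = v
  · subst hu
    simp only [Pi.add_apply, Function.update_self, Pi.single_eq_same]
    omega
  · simp [hu]

theorem exists_adj_add_eq_s15 (hb : IsBasicCover G k b) (hk : 1 ≤ k) {v : V}
    (hv_adj : ∃ w, G.Adj v w) (hv : 1 ≤ b v) : ∃ w, G.Adj v w ∧ b v + b w = k := by
  by_contra! hslack
  have hgt : ∀ w, G.Adj v w → k < b v + b w := fun w hw =>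
    lt_of_le_of_ne (hb.1.2 v w hw) (hslack w hw).symm
  have hedge : ∀ i j, G.Adj i j →
      k ≤ Function.update b v (b v - 1) i + Function.update b v (b v - 1) j := by
    intro i j hij
    rw [Function.update_apply, Function.update_apply]
    by_cases hi : i = v
    · subst hi
      have := hgt j hij
      rw [if_pos rfl, if_neg hij.ne']
      omega
    by_cases hj : j = v
    · subst hj
      have := hgt i hij.symm
      rw [if_neg hi, if_pos rfl]
      omega
    rw [if_neg hi, if_neg hj]
    exact hb.1.2 i j hij
  refine hb.not_isCover_update_pred hv ⟨fun h0 => ?_, hedge⟩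
  obtain ⟨w, hw⟩ := hv_adj
  have := hedge v w hw
  rw [h0, Pi.zero_apply, Pi.zero_apply] at this
  omega

theorem nsmul (hiso : ∀ v : V, ∃ w, G.Adj v w) {c : V → ℕ} (hc : IsBasicCover G 1 c)
    (hk : 1 ≤ k) : IsBasicCover G k (k • c) := by
  refine ⟨⟨smul_ne_zero (by omega) hc.1.1, fun i j hij => ?_⟩, ?_⟩
  · simpa [← mul_add] using Nat.le_mul_of_pos_right k (hc.1.2 i j hij)
  rintro ⟨b, d, hb, hd, hkc⟩
  obtain ⟨v, hv⟩ := Function.ne_iff.mp hd.1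
  have hkcv : k * c v = b v + d v := by simpa using congrFun hkc v
  simp only [Pi.zero_apply] at hv
  have hcv : 1 ≤ c v := Nat.one_le_iff_ne_zero.mpr fun h0 => by
    rw [h0, mul_zero] at hkcv
    omega
  obtain ⟨w, hw, htight⟩ := hc.exists_adj_add_eq_s15 le_rfl (hiso v) hcv
  have hkcw : k * c w = b w + d w := by simpa using congrFun hkc w
  have hktight : k * c v + k * c w = k := by rw [← mul_add, htight, mul_one]
  have := hb.2 v w hw
  omega

end IsBasicCover

/-- Let `G` have at least one vertex and no isolated vertices.  If for every
`k ≥ 1` all basic `k`-covers of `G` have the same norm, then `G` is an unmixed domain. -/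
theorem equal_norms_imply_unmixed_domain [Nonempty V] (G : SimpleGraph V)
    (hiso : ∀ v : V, ∃ w, G.Adj v w)
    (h : ∀ k : ℕ, 1 ≤ k → ∀ a b : V → ℕ, IsBasicCover G k a → IsBasicCover G k b →
      ∑ v, a v = ∑ v, b v) :
    IsUnmixed G ∧ IsGraphDomain G := by
  have hone : IsCover G 1 1 := ⟨one_ne_zero, fun _ _ _ => le_add_right le_rfl⟩
  obtain ⟨c, hc, -⟩ := hone.exists_isBasicCover_norm_le
  have hnorm : ∀ k, 1 ≤ k → ∀ b, IsBasicCover G k b → ∑ v, b v = k * ∑ v, c v :=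
    fun k hk b hb => by simp [h k hk b _ hb (hc.nsmul hiso hk), Finset.mul_sum]
  refine ⟨fun a b ha hb => h 1 le_rfl a b ha hb, fun s t hst f g hf hg => ?_⟩
  have hsum : ∑ v, ((∑ p, f p) + (∑ q, g q)) v = (s + 2 * t) * ∑ v, c v := by
    simp only [Pi.add_apply, Finset.sum_apply, Finset.sum_add_distrib]
    rw [Finset.sum_comm, Finset.sum_comm (γ := V)]
    simp only [hnorm 1 le_rfl _ (hf _), hnorm 2 (by norm_num) _ (hg _), Finset.sum_const,
      Finset.card_univ, Fintype.card_fin, smul_eq_mul]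
    ring
  refine IsCover.isBasicCover_of_norm_eq ⟨fun h0 => ?_, fun i j hij => ?_⟩
    (hnorm _ (by omega)) hsum
  · have := Nat.mul_pos (by omega : 0 < s + 2 * t) hc.1.norm_pos
    simp only [h0, Pi.zero_apply, Finset.sum_const_zero] at hsum
    omega
  · have hfs := le_sum_apply_add_sum_apply (s := Finset.univ) (fun p _ => (hf p).1) hij
    have hgs := le_sum_apply_add_sum_apply (s := Finset.univ) (fun q _ => (hg q).1) hij
    simp only [Finset.sum_const, Finset.card_univ, Fintype.card_fin, smul_eq_mul] at hfs hgs
    simp only [Pi.add_apply]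
    omega
end

section
/- Let G be a finite simple graph with n vertices, none of them isolated. If G admits a perfect matching and every basic 1-cover of G has norm n/2 (twice its norm equals n), then G satisfies MSC. -/
variable {V : Type*} [Fintype V] [DecidableEq V]

/-!
If `{i, j}` is an edge of the perfect matching and two neighbours `i'`, `j'` of `i`, `j` are not
adjacent, extend `{i', j'}` to a maximal independent set `S`. The indicator of the vertex cover
`Sᶜ` is a basic `1`-cover; it gives weight at least `1` to every matching edge and weight `2` to
`{i, j}`, so twice its norm exceeds the number of vertices.
-/

namespace SimpleGraph

variable {α : Type*} {G : SimpleGraph α}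

lemma exists_adj_of_maximal_isIndepSet {S : Set α} (hS : Maximal G.IsIndepSet S) {v : α}
    (hv : v ∉ S) : ∃ w ∈ S, G.Adj v w := by
  by_contra! h
  have hindep : G.IsIndepSet (insert v S) :=
    hS.1.insert fun w hw _ => ⟨h w hw, fun hwv => h w hw hwv.symm⟩
  exact hv (hS.2 hindep (Set.subset_insert v S) (Set.mem_insert v S))

lemma Subgraph.IsPerfectMatching.exists_involutive_partner {M : G.Subgraph}
    (hM : M.IsPerfectMatching) :
    ∃ f : α → α, Function.Involutive f ∧ ∀ v w, M.Adj v w ↔ w = f v := by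
  choose f hf hf_unique using Subgraph.isPerfectMatching_iff.1 hM
  have hadj : ∀ v w, M.Adj v w ↔ w = f v :=
    fun v w => ⟨hf_unique v w, fun h => h ▸ hf v⟩
  exact ⟨f, fun v => ((hadj _ _).1 (hf v).symm).symm, hadj⟩

lemma Subgraph.IsPerfectMatching.card_lt_two_mul_sum [Fintype α] {M : G.Subgraph}
    (hM : M.IsPerfectMatching) (a : α → ℕ) (ha : ∀ v w, M.Adj v w → 1 ≤ a v + a w)
    {i j : α} (hij : M.Adj i j) (h2 : 2 ≤ a i + a j) :
    Fintype.card α < 2 * ∑ v, a v := by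
  obtain ⟨f, hf, hadj⟩ := hM.exists_involutive_partner
  have hfi : f i = j := ((hadj i j).1 hij).symm
  calc Fintype.card α = ∑ _v : α, 1 := by simp
    _ < ∑ v, (a v + a (f v)) :=
      Finset.sum_lt_sum (fun v _ => ha v (f v) ((hadj v _).2 rfl))
        ⟨i, Finset.mem_univ i, hfi ▸ h2⟩
    _ = 2 * ∑ v, a v := by
      rw [Finset.sum_add_distrib, hf.bijective.sum_comp a, two_mul]

lemma isBasicCover_indicator_compl_of_maximal_isIndepSet {S : Set α}
    (hS : Maximal G.IsIndepSet S) {v : α} (hv : v ∉ S) :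
    IsBasicCover G 1 (Sᶜ.indicator 1) := by
  have hcover : IsCover G 1 (Sᶜ.indicator 1) := by
    refine ⟨fun h0 => by simpa [hv] using congrFun h0 v, fun x y hxy => ?_⟩
    by_cases hx : x ∈ S
    · have hy : y ∉ S := fun hy => hS.1 hx hy (G.ne_of_adj hxy) hxy
      simp [hy]
    · simp [hx]
  refine ⟨hcover, ?_⟩
  -- A vertex `w` with `c w > 0` lies outside `S`, so `b w = 0`; its neighbour in `S` has `b = 0` too.
  rintro ⟨b, c, hb, hc, hbc⟩
  obtain ⟨w, hw⟩ := Function.ne_iff.1 hc.1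
  rw [Pi.zero_apply] at hw
  have hw_eq := congrFun hbc w
  have hwS : w ∉ S := fun hwS => by simp [hwS] at hw_eq; omega
  obtain ⟨u, huS, hwu⟩ := exists_adj_of_maximal_isIndepSet hS hwS
  have hu_eq := congrFun hbc u
  simp only [Pi.add_apply, Set.indicator_of_mem (Set.mem_compl hwS),
    Set.indicator_of_notMem (Set.notMem_compl_iff.2 huS), Pi.one_apply] at hw_eq hu_eq
  have := hb.2 w u hwu
  omega

end SimpleGraph

open SimpleGraph

/-- Let `G` have `n` vertices, none of them isolated.  If `G` admits a perfect
matching and every basic `1`-cover of `G` has norm `n / 2` (twice its norm equals `n`),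
then `G` satisfies MSC. -/
theorem matching_and_norms_imply_msc [Nonempty V] (G : SimpleGraph V)
    (hiso : ∀ v : V, ∃ w, G.Adj v w)
    (hm : ∃ M : G.Subgraph, M.IsPerfectMatching)
    (h : ∀ a : V → ℕ, IsBasicCover G 1 a → 2 * (∑ v, a v) = Fintype.card V) :
    SatisfiesMSC G := by
  obtain ⟨M, hM⟩ := hm
  refine ⟨M, Set.ext fun v => ⟨fun _ => hiso v, fun _ => hM.2 v⟩,
    ⟨Classical.arbitrary V, hM.2 _⟩, hM.1, fun i j hij i' j' hii' hjj' => ?_⟩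
  by_contra hi'j'
  have hpair : G.IsIndepSet {i', j'} :=
    Set.pairwise_pair.2 fun _ => ⟨hi'j', fun h => hi'j' h.symm⟩
  obtain ⟨S, hpS, hS⟩ := Finite.exists_le_maximal hpair
  have hiS : i ∉ S := fun hi => hS.1 hi (hpS (by simp)) (G.ne_of_adj hii') hii'
  have hjS : j ∉ S := fun hj => hS.1 hj (hpS (by simp)) (G.ne_of_adj hjj') hjj'
  have hbasic := isBasicCover_indicator_compl_of_maximal_isIndepSet hS hiS
  have hlt := hM.card_lt_two_mul_sum _ (fun v w hvw => hbasic.1.2 v w (M.adj_sub hvw)) hij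
    (by simp [hiS, hjS])
  exact hlt.ne' (h _ hbasic)
end

section
/- Let G be a bipartite finite simple graph with at least one vertex and without isolated vertices. Then G is unmixed if and only if G satisfies MSC. -/
variable {V : Type*} [Fintype V] [DecidableEq V]

/-!
Basic `1`-covers are exactly the indicator functions of minimal vertex covers, so `G` is unmixed
iff all minimal vertex covers have the same size. A vertex cover meets every edge of a perfect
matching `M`, so it has at least `|V| / 2` vertices, and more if it contains both ends of an edge
of `M`. Under MSC a minimal cover cannot contain both ends of an `M`-edge `{i, j}` (their
uncovered neighbours `i'`, `j'` would be adjacent), so all minimal covers have size `|V| / 2`.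
Conversely, the two colour classes of a bipartite graph without isolated vertices are minimal
covers; if all minimal covers have the same size, Hall's condition holds and gives a perfect
matching `M`. If `{i, j} ∈ M` had non-adjacent neighbours `i'`, `j'`, a minimal cover avoiding
`i'` and `j'` would contain both `i` and `j`, hence be too large.
-/

namespace SimpleGraph

variable {V : Type*} {G : SimpleGraph V} {S : Set V}

theorem minimal_isVertexCover_iff :
    Minimal G.IsVertexCover S ↔ G.IsVertexCover S ∧ ∀ v ∈ S, ∃ w, G.Adj v w ∧ w ∉ S := by
  refine ⟨fun hS => ⟨hS.prop, fun v hv => ?_⟩, fun ⟨hS, hloc⟩ => ⟨hS, fun T hT hTS v hv => ?_⟩⟩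
  · by_contra! hnbr
    have hcover : G.IsVertexCover (S \ {v}) := by
      intro a b hab
      rcases hS.prop hab with ha | hb
      · by_cases hav : a = v
        · subst hav
          exact Or.inr ⟨hnbr b hab, G.ne_of_adj hab |>.symm⟩
        · exact Or.inl ⟨ha, hav⟩
      · by_cases hbv : b = v
        · subst hbv
          exact Or.inl ⟨hnbr a hab.symm, G.ne_of_adj hab⟩
        · exact Or.inr ⟨hb, hbv⟩
    exact (hS.eq_of_le hcover Set.sdiff_subset ▸ hv).2 rfl
  · by_contra hvT
    obtain ⟨w, hvw, hwS⟩ := hloc v hv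
    exact (hT hvw).elim hvT fun hwT => hwS (hTS hwT)

theorem IsVertexCover.exists_minimal_subset [Finite V] (hS : G.IsVertexCover S) :
    ∃ T ⊆ S, Minimal G.IsVertexCover T :=
  exists_minimal_le_of_wellFoundedLT _ S hS

namespace Subgraph

variable {M : G.Subgraph}

theorem IsMatching.ncard_le [Finite V] (hM : M.IsMatching) {s t : Set V}
    (h : ∀ v ∈ s, ∃ w ∈ t, M.Adj v w) : s.ncard ≤ t.ncard := by
  choose! f hft hadj using h
  exact Set.ncard_le_ncard_of_injOn f hft
    fun v hv w hw hvw => hM.eq_of_adj_right (hadj v hv) (hvw ▸ hadj w hw)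

theorem IsPerfectMatching.exists_adj (hM : M.IsPerfectMatching) (v : V) : ∃ w, M.Adj v w :=
  (hM.1 (hM.2 v)).exists

theorem IsPerfectMatching.ncard_compl_le [Finite V] (hM : M.IsPerfectMatching)
    (hS : G.IsVertexCover S) : Sᶜ.ncard ≤ S.ncard :=
  hM.1.ncard_le fun v hv =>
    let ⟨w, hvw⟩ := hM.exists_adj v
    ⟨w, (hS (M.adj_sub hvw)).resolve_left hv, hvw⟩

theorem IsPerfectMatching.ncard_compl_lt [Finite V] (hM : M.IsPerfectMatching)
    (hS : G.IsVertexCover S) {v w : V} (hvw : M.Adj v w) (hv : v ∈ S) (hw : w ∈ S) :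
    Sᶜ.ncard < S.ncard := by
  have hle : Sᶜ.ncard ≤ (S \ {v}).ncard := hM.1.ncard_le fun x hx => by
    obtain ⟨y, hxy⟩ := hM.exists_adj x
    refine ⟨y, ⟨(hS (M.adj_sub hxy)).resolve_left hx, ?_⟩, hxy⟩
    rintro rfl
    exact hx (hM.1.eq_of_adj_right hxy hvw.symm ▸ hw)
  rw [Set.ncard_sdiff_singleton_of_mem hv] at hle
  have : 0 < S.ncard := (Set.ncard_pos).2 ⟨v, hv⟩
  omega

theorem IsPerfectMatching.adj_of_adj_of_adj [Finite V] (hM : M.IsPerfectMatching)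
    (hcard : ∀ S, Minimal G.IsVertexCover S → S.ncard ≤ Sᶜ.ncard) {i j i' j' : V}
    (hij : M.Adj i j) (hii' : G.Adj i i') (hjj' : G.Adj j j') : G.Adj i' j' := by
  by_contra hnadj
  have hcover : G.IsVertexCover {i', j'}ᶜ := by
    intro a b hab
    by_contra! h
    simp only [Set.mem_compl_iff, not_not, Set.mem_insert_iff, Set.mem_singleton_iff] at h
    obtain ⟨rfl | rfl, rfl | rfl⟩ := h
    exacts [G.loopless.irrefl _ hab, hnadj hab, hnadj hab.symm, G.loopless.irrefl _ hab]
  obtain ⟨S, hST, hS⟩ := hcover.exists_minimal_subset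
  have hi : i ∈ S := (hS.prop hii').resolve_right fun h => hST h (by simp)
  have hj : j ∈ S := (hS.prop hjj').resolve_right fun h => hST h (by simp)
  exact (hM.ncard_compl_lt hS.prop hij hi hj).not_ge (hcard S hS)

end Subgraph

theorem Colorable.exists_isBipartiteWith_compl (h : G.Colorable 2) :
    ∃ s : Set V, G.IsBipartiteWith s sᶜ := by
  obtain ⟨c⟩ := h
  refine ⟨{v | c v = 0}, ⟨disjoint_compl_right, fun v w hvw => ?_⟩⟩
  have := c.valid hvw
  simp only [Set.mem_ofPred_eq, Set.mem_compl_iff]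
  omega

variable {s t : Set V}

theorem IsBipartiteWith.minimal_isVertexCover (h : G.IsBipartiteWith s t)
    (hs : ∀ v ∈ s, ∃ w, G.Adj v w) : Minimal G.IsVertexCover s := by
  refine minimal_isVertexCover_iff.2 ⟨fun v w hvw => ?_, fun v hv => ?_⟩
  · rcases h.mem_of_adj hvw with ⟨hv, -⟩ | ⟨-, hw⟩
    exacts [Or.inl hv, Or.inr hw]
  · obtain ⟨w, hvw⟩ := hs v hv
    exact ⟨w, hvw, h.disjoint.notMem_of_mem_right (h.mem_of_mem_adj hv hvw)⟩

theorem IsBipartiteWith.ncard_le_ncard_iUnion_neighborSet [Finite V] (h : G.IsBipartiteWith s t)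
    (hcov : ∀ C, G.IsVertexCover C → s.ncard ≤ C.ncard) {A : Set V} (hA : A ⊆ s) :
    A.ncard ≤ (⋃ x ∈ A, G.neighborSet x).ncard := by
  set N := ⋃ x ∈ A, G.neighborSet x
  have hcover : G.IsVertexCover ((s \ A) ∪ N) := by
    have key : ∀ ⦃v w⦄, G.Adj v w → v ∈ s → v ∈ (s \ A) ∪ N ∨ w ∈ (s \ A) ∪ N := by
      intro v w hvw hv
      by_cases hvA : v ∈ A
      · exact Or.inr (Or.inr (Set.mem_biUnion hvA hvw))
      · exact Or.inl (Or.inl ⟨hv, hvA⟩)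
    intro v w hvw
    rcases h.mem_of_adj hvw with ⟨hv, -⟩ | ⟨-, hw⟩
    exacts [key hvw hv, (key hvw.symm hw).symm]
  have := (hcov _ hcover).trans (Set.ncard_union_le _ _)
  rw [Set.ncard_sdiff hA] at this
  have := Set.ncard_le_ncard hA
  omega

theorem IsBipartiteWith.exists_isPerfectMatching [Finite V] (h : G.IsBipartiteWith s sᶜ)
    (hcov : ∀ C, G.IsVertexCover C → s.ncard ≤ C.ncard) (hs : sᶜ.ncard ≤ s.ncard) :
    ∃ M : G.Subgraph, M.IsPerfectMatching := by
  have := Fintype.ofFinite V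
  classical
  obtain ⟨M, hsM, hM⟩ := exists_isMatching_of_forall_ncard_le h
    fun A hA => h.ncard_le_ncard_iUnion_neighborSet hcov hA
  have hle : s.ncard ≤ (sᶜ ∩ M.verts).ncard := hM.ncard_le fun v hv => by
    obtain ⟨w, hvw⟩ := (hM (hsM hv)).exists
    exact ⟨w, ⟨h.mem_of_mem_adj hv (M.adj_sub hvw), M.edge_vert hvw.symm⟩, hvw⟩
  have hcompl : sᶜ ∩ M.verts = sᶜ :=
    Set.eq_of_subset_of_ncard_le Set.inter_subset_left (hs.trans hle)
  refine ⟨M, hM, fun v => ?_⟩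
  by_cases hv : v ∈ s
  exacts [hsM hv, (hcompl.ge hv).2]

end SimpleGraph

section

open SimpleGraph

variable {V : Type*} {G : SimpleGraph V} {a : V → ℕ}

theorem Set.sum_indicator_one_eq_ncard [Fintype V] (S : Set V) :
    ∑ v, S.indicator (1 : V → ℕ) v = S.ncard := by
  classical
  simp [Set.indicator_apply, Finset.sum_boole, Set.ncard_eq_toFinset_card']

theorem IsBasicCover.not_isCover_sub_single [DecidableEq V] {k : ℕ} (ha : IsBasicCover G k a)
    {v : V} (hv : a v ≠ 0) : ¬ IsCover G k (a - Pi.single v 1) := by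
  intro hcover
  refine ha.2 ⟨_, Pi.single v 1, hcover, ⟨fun h => ?_, fun _ _ _ => Nat.zero_le _⟩, ?_⟩
  · simpa using congrFun h v
  · funext u
    by_cases hu : u = v <;> simp [hu]
    omega

theorem IsBasicCover.le_one (ha : IsBasicCover G 1 a) (v : V) : a v ≤ 1 := by
  classical
  by_contra! hv
  refine ha.not_isCover_sub_single (v := v) (by omega) ⟨fun h => ?_, fun i j hij => ?_⟩
  · have := congrFun h v
    simp only [Pi.sub_apply, Pi.single_eq_same, Pi.zero_apply] at this
    omega
  · have := ha.1.2 i j hij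
    by_cases hi : i = v <;> by_cases hj : j = v <;> simp [hi, hj] <;> omega

theorem IsBasicCover.eq_indicator_support (ha : IsBasicCover G 1 a) :
    a = (Function.support a).indicator 1 := by
  funext v
  have := ha.le_one v
  by_cases hv : a v = 0 <;> simp [hv]
  omega

theorem IsBasicCover.minimal_isVertexCover_support (hiso : ∀ v : V, ∃ w, G.Adj v w)
    (ha : IsBasicCover G 1 a) : Minimal G.IsVertexCover (Function.support a) := by
  classical
  refine minimal_isVertexCover_iff.2 ⟨fun i j hij => ?_, fun v hv => ?_⟩
  · have := ha.1.2 i j hij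
    simp only [Function.mem_support]
    omega
  · by_contra! hnbr
    obtain ⟨w, hvw⟩ := hiso v
    refine ha.not_isCover_sub_single hv ⟨fun h => hnbr w hvw ?_, fun i j hij => ?_⟩
    · simpa [Pi.single_apply, (G.ne_of_adj hvw).symm] using congrFun h w
    · have hcover := ha.1.2 i j hij
      by_cases hi : i = v
      · subst hi
        have := hnbr j hij
        simp only [Function.mem_support] at this
        simp [(G.ne_of_adj hij).symm]
        omega
      · by_cases hj : j = v
        · subst hj
          have := hnbr i hij.symm
          simp only [Function.mem_support] at this
          simp [hi]
          omega
        · simpa [hi, hj] using hcover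

theorem isBasicCover_indicator {S : Set V} (hS : Minimal G.IsVertexCover S) (hne : S.Nonempty) :
    IsBasicCover G 1 (S.indicator 1) := by
  obtain ⟨u, hu⟩ := hne
  refine ⟨⟨fun h => by simpa [hu] using congrFun h u, fun i j hij => ?_⟩, ?_⟩
  · rcases hS.prop hij with h | h <;> simp [h]
  · rintro ⟨b, c, hb, hc, habc⟩
    obtain ⟨v, hv⟩ : ∃ v, c v ≠ 0 := by
      by_contra! h
      exact hc.1 (funext h)
    have hval := congrFun habc v
    have hvS : v ∈ S := by
      by_contra hvS
      simp only [Set.indicator_of_notMem hvS, Pi.add_apply] at hval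
      omega
    obtain ⟨w, hvw, hwS⟩ := (minimal_isVertexCover_iff.1 hS).2 v hvS
    have hwval := congrFun habc w
    have := hb.2 v w hvw
    simp only [Set.indicator_of_mem hvS, Set.indicator_of_notMem hwS, Pi.add_apply,
      Pi.one_apply] at hval hwval
    omega

theorem isUnmixed_iff [Fintype V] [Nonempty V] (hiso : ∀ v : V, ∃ w, G.Adj v w) :
    IsUnmixed G ↔ ∀ S T : Set V, Minimal G.IsVertexCover S → Minimal G.IsVertexCover T →
      S.ncard = T.ncard := by
  have hne : ∀ S, Minimal G.IsVertexCover S → S.Nonempty := fun S hS => by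
    obtain ⟨w, hvw⟩ := hiso (Classical.arbitrary V)
    exact (hS.prop hvw).elim (⟨_, ·⟩) (⟨_, ·⟩)
  refine ⟨fun hU S T hS hT => ?_, fun h a b ha hb => ?_⟩
  · simpa only [Set.sum_indicator_one_eq_ncard] using
      hU _ _ (isBasicCover_indicator hS (hne S hS)) (isBasicCover_indicator hT (hne T hT))
  · rw [ha.eq_indicator_support, hb.eq_indicator_support, Set.sum_indicator_one_eq_ncard,
      Set.sum_indicator_one_eq_ncard]
    exact h _ _ (ha.minimal_isVertexCover_support hiso) (hb.minimal_isVertexCover_support hiso)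

theorem SatisfiesMSC.two_mul_ncard_eq [Finite V] (hiso : ∀ v : V, ∃ w, G.Adj v w)
    (h : SatisfiesMSC G) {S : Set V} (hS : Minimal G.IsVertexCover S) :
    2 * S.ncard = Nat.card V := by
  obtain ⟨M, hverts, -, hmatch, hcond⟩ := h
  have hM : M.IsPerfectMatching := ⟨hmatch, fun v => hverts ▸ hiso v⟩
  have hle : S.ncard ≤ Sᶜ.ncard := hmatch.ncard_le fun v hv => by
    obtain ⟨w, hvw⟩ := hM.exists_adj v
    refine ⟨w, fun hw => ?_, hvw⟩
    obtain ⟨v', hvv', hv'⟩ := (minimal_isVertexCover_iff.1 hS).2 v hv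
    obtain ⟨w', hww', hw'⟩ := (minimal_isVertexCover_iff.1 hS).2 w hw
    exact (hS.prop (hcond v w hvw v' w' hvv' hww')).elim hv' hw'
  have := hM.ncard_compl_le hS.prop
  have := S.ncard_add_ncard_compl
  omega

theorem SimpleGraph.IsBipartiteWith.satisfiesMSC [Finite V] [Nonempty V] {s : Set V}
    (h : G.IsBipartiteWith s sᶜ) (hiso : ∀ v : V, ∃ w, G.Adj v w)
    (hU : ∀ S T : Set V, Minimal G.IsVertexCover S → Minimal G.IsVertexCover T →
      S.ncard = T.ncard) : SatisfiesMSC G := by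
  have hs := h.minimal_isVertexCover fun v _ => hiso v
  have hsc := h.symm.minimal_isVertexCover fun v _ => hiso v
  have hcover : ∀ C, G.IsVertexCover C → s.ncard ≤ C.ncard := fun C hC => by
    obtain ⟨S, hSC, hS⟩ := hC.exists_minimal_subset
    exact (hU s S hs hS).trans_le (Set.ncard_le_ncard hSC)
  have hhalf : ∀ S, Minimal G.IsVertexCover S → S.ncard ≤ Sᶜ.ncard := fun S hS => by
    have := hU S s hS hs
    have := hU s sᶜ hs hsc
    have := S.ncard_add_ncard_compl
    have := s.ncard_add_ncard_compl
    omega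
  obtain ⟨M, hM⟩ := h.exists_isPerfectMatching hcover (hU _ _ hsc hs).le
  refine ⟨M, ?_, ⟨Classical.arbitrary V, hM.2 _⟩, hM.1,
    fun i j hij i' j' => hM.adj_of_adj_of_adj hhalf hij⟩
  exact (Set.eq_univ_of_forall hM.2).trans (Set.eq_univ_of_forall hiso).symm

end

/-- Villarreal: Let `G` be a bipartite graph with at least one vertex and
without isolated vertices.  Then `G` is unmixed if and only if `G` satisfies MSC. -/
theorem bipartite_unmixed_iff_msc [Nonempty V] (G : SimpleGraph V)
    (hbip : G.Colorable 2) (hiso : ∀ v : V, ∃ w, G.Adj v w) :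
    IsUnmixed G ↔ SatisfiesMSC G := by
  obtain ⟨s, hs⟩ := hbip.exists_isBipartiteWith_compl
  rw [isUnmixed_iff hiso]
  refine ⟨hs.satisfiesMSC hiso, fun hmsc S T hS hT => ?_⟩
  have := hmsc.two_mul_ncard_eq hiso hS
  have := hmsc.two_mul_ncard_eq hiso hT
  omega
end
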